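/- Let f : 2^N → ℝ be a set function on a finite ground set N with n := |N|, and let α and β be permutations of N. Then for every index i, ∑_{j=1}^n I_{α,β}(α_i, β_j) = f(α_i | α_{1:i−1}); for every index j, ∑_{i=1}^n I_{α,β}(α_i, β_j) = f(β_j | β_{1:j−1}); and ∑_{i=1}^n ∑_{j=1}^n I_{α,β}(α_i, β_j) = f(N) − f(∅). -/
import Mathlib


open Finset

/-- The marginal value `f(A | C) := f(A ∪ C) - f(C)` of a set function. -/
def margS {V : Type*} [DecidableEq V] (f : Finset V → ℝ) (A C : Finset V) : ℝ :=
  f (A ∪ C) - f C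

/-- The marginal value `f(u | C) := f({u} ∪ C) - f C`. -/
def marg {V : Type*} [DecidableEq V] (f : Finset V → ℝ) (u : V) (C : Finset V) : ℝ :=
  f (insert u C) - f C

/-- The conditional mutual coverage `I_f(A; B | C) := f(A|C) + f(B|C) - f(A ∪ B | C)`. -/
def mutcov {V : Type*} [DecidableEq V] (f : Finset V → ℝ) (A B C : Finset V) : ℝ :=
  margS f A C + margS f B C - margS f (A ∪ B) C

/-- The prefix `π_{1:i}` of a permutation `π` (0-indexed: the set of the first `i` elements). -/
def pref {V : Type*} [DecidableEq V] {n : ℕ} (π : Fin n → V) (i : ℕ) : Finset V :=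
  (Finset.univ.filter fun j : Fin n => (j : ℕ) < i).image π

/-- The `(i,j)` mutual affinity of the pair of permutations `(α, β)`:
`I_{α,β}(α_i, β_j) := I_f(α_i; β_j | α_{1:i−1} ∪ β_{1:j−1})`. -/
def mfI {V : Type*} [DecidableEq V] {n : ℕ} (f : Finset V → ℝ) (a b : Fin n → V)
    (i j : Fin n) : ℝ :=
  mutcov f {a i} {b j} (pref a i ∪ pref b j)

lemma pref_zero {V : Type*} [DecidableEq V] {n : ℕ} (π : Fin n → V) : pref π 0 = ∅ := by
  simp [pref]

lemma pref_succ {V : Type*} [DecidableEq V] {n : ℕ} (π : Fin n → V) (i : Fin n) :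
    pref π ((i : ℕ) + 1) = insert (π i) (pref π i) := by
  ext x
  simp only [pref, mem_image, mem_filter, mem_univ, true_and, mem_insert]
  constructor
  · rintro ⟨j, hj, rfl⟩
    rcases Nat.lt_succ_iff_lt_or_eq.mp hj with h | h
    · exact Or.inr ⟨j, h, rfl⟩
    · exact Or.inl (by rw [Fin.ext h])
  · rintro (rfl | ⟨j, hj, rfl⟩)
    · exact ⟨i, Nat.lt_succ_self _, rfl⟩
    · exact ⟨j, Nat.lt_succ_of_lt hj, rfl⟩

lemma pref_top {V : Type*} [Fintype V] [DecidableEq V] {n : ℕ} (π : Fin n ≃ V) :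
    pref π n = univ := by
  ext x
  simp only [pref, mem_image, mem_filter, mem_univ, true_and, iff_true]
  exact ⟨π.symm x, (π.symm x).isLt, π.apply_symm_apply x⟩

lemma mfI_eq {V : Type*} [DecidableEq V] {n : ℕ} (f : Finset V → ℝ) (a b : Fin n → V)
    (i j : Fin n) :
    mfI f a b i j =
      (f (pref a ((i:ℕ)+1) ∪ pref b j) - f (pref a i ∪ pref b j)) -
      (f (pref a ((i:ℕ)+1) ∪ pref b ((j:ℕ)+1)) - f (pref a i ∪ pref b ((j:ℕ)+1))) := by
  have h1 : {a i} ∪ (pref a i ∪ pref b j) = pref a ((i:ℕ)+1) ∪ pref b j := by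
    rw [pref_succ]; ext x; simp
  have h2 : {b j} ∪ (pref a i ∪ pref b j) = pref a i ∪ pref b ((j:ℕ)+1) := by
    rw [pref_succ]; ext x; simp
  have h3 : ({a i} ∪ {b j}) ∪ (pref a i ∪ pref b j)
      = pref a ((i:ℕ)+1) ∪ pref b ((j:ℕ)+1) := by
    rw [pref_succ, pref_succ]; ext x; simp; tauto
  simp only [mfI, mutcov, margS, h1, h2, h3]
  ring

lemma mfI_row {V : Type*} [Fintype V] [DecidableEq V]
    (f : Finset V → ℝ) (a b : Fin (Fintype.card V) ≃ V) (i : Fin (Fintype.card V)) :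
    ∑ j : Fin (Fintype.card V), mfI f a b i j = marg f (a i) (pref a i) := by
  rw [Finset.sum_congr rfl (fun j _ => mfI_eq f a b i j),
    Fin.sum_univ_eq_sum_range (fun j : ℕ =>
      (f (pref ⇑a ((i:ℕ)+1) ∪ pref ⇑b j) - f (pref ⇑a i ∪ pref ⇑b j)) -
      (f (pref ⇑a ((i:ℕ)+1) ∪ pref ⇑b (j+1)) - f (pref ⇑a i ∪ pref ⇑b (j+1)))),
    Finset.sum_range_sub' (fun j : ℕ =>
      f (pref ⇑a ((i:ℕ)+1) ∪ pref ⇑b j) - f (pref ⇑a i ∪ pref ⇑b j)),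
    pref_zero, pref_top, Finset.union_empty, Finset.union_empty,
    Finset.union_eq_right.mpr (Finset.subset_univ _),
    Finset.union_eq_right.mpr (Finset.subset_univ _), pref_succ, marg]
  ring

lemma mfI_col {V : Type*} [Fintype V] [DecidableEq V]
    (f : Finset V → ℝ) (a b : Fin (Fintype.card V) ≃ V) (j : Fin (Fintype.card V)) :
    ∑ i : Fin (Fintype.card V), mfI f a b i j = marg f (b j) (pref b j) := by
  have h : ∀ i : Fin (Fintype.card V), mfI f a b i j =
      (f (pref ⇑a i ∪ pref ⇑b ((j:ℕ)+1)) - f (pref ⇑a i ∪ pref ⇑b j)) -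
      (f (pref ⇑a ((i:ℕ)+1) ∪ pref ⇑b ((j:ℕ)+1)) - f (pref ⇑a ((i:ℕ)+1) ∪ pref ⇑b j)) := by
    intro i; rw [mfI_eq]; ring
  rw [Finset.sum_congr rfl (fun i _ => h i),
    Fin.sum_univ_eq_sum_range (fun i : ℕ =>
      (f (pref ⇑a i ∪ pref ⇑b ((j:ℕ)+1)) - f (pref ⇑a i ∪ pref ⇑b j)) -
      (f (pref ⇑a (i+1) ∪ pref ⇑b ((j:ℕ)+1)) - f (pref ⇑a (i+1) ∪ pref ⇑b j))),
    Finset.sum_range_sub' (fun i : ℕ =>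
      f (pref ⇑a i ∪ pref ⇑b ((j:ℕ)+1)) - f (pref ⇑a i ∪ pref ⇑b j)),
    pref_zero, pref_top, Finset.empty_union, Finset.empty_union,
    Finset.union_eq_left.mpr (Finset.subset_univ _),
    Finset.union_eq_left.mpr (Finset.subset_univ _), pref_succ, marg]
  ring

/-- Mutual affinity telescopes: its row sums give the marginal coverages in `α`, its column
sums give the marginal coverages in `β`, and its total sum gives `f(N) − f(∅)`. -/
theorem mfI_telescopes {V : Type*} [Fintype V] [DecidableEq V]
    (f : Finset V → ℝ) (a b : Fin (Fintype.card V) ≃ V) :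
    (∀ i : Fin (Fintype.card V),
        ∑ j : Fin (Fintype.card V), mfI f a b i j = marg f (a i) (pref a i)) ∧
    (∀ j : Fin (Fintype.card V),
        ∑ i : Fin (Fintype.card V), mfI f a b i j = marg f (b j) (pref b j)) ∧
    (∑ i : Fin (Fintype.card V), ∑ j : Fin (Fintype.card V), mfI f a b i j
        = f Finset.univ - f ∅) := by
  refine ⟨mfI_row f a b, mfI_col f a b, ?_⟩
  have h : ∀ i : Fin (Fintype.card V), ∑ j : Fin (Fintype.card V), mfI f a b i j
      = f (pref ⇑a ((i:ℕ)+1)) - f (pref ⇑a i) := by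
    intro i
    rw [mfI_row f a b i, marg, pref_succ]
  rw [Finset.sum_congr rfl (fun i _ => h i),
    Fin.sum_univ_eq_sum_range (fun i : ℕ => f (pref ⇑a (i+1)) - f (pref ⇑a i)),
    Finset.sum_range_sub (fun i : ℕ => f (pref ⇑a i)), pref_top, pref_zero]
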